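/- Let D > 0, τ ≥ 0, and let g : ℝ² → ℝ satisfy (H1) and (H2). Let d > 0 be such that u ↦ du + u·g(u,1) is nondecreasing on [0, 1], and let u : ℤ × [−τ, ∞) → ℝ be the mild solution of the delayed lattice equation with initial data φ satisfying 0 ≤ φ_n(s) ≤ 1 for all n ∈ ℤ, s ∈ [−τ, 0]. Then 0 ≤ u_n(t) ≤ 1 for all n ∈ ℤ and t > 0. -/

import Mathlib

open Real Filter

/-- (H1): `g(1,0) = 0` and `g(u,0) > 0` for `u ∈ (0,1)`. -/
def HypH1 (g : ℝ → ℝ → ℝ) : Prop :=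
  g 1 0 = 0 ∧ ∀ u ∈ Set.Ioo (0:ℝ) 1, 0 < g u 0

/-- (H2): `g` is Lipschitz continuous and strictly decreasing in each argument on
`[0,1]×[0,1]`, and `g(u,0) → −∞` as `u → ∞`. -/
def HypH2 (g : ℝ → ℝ → ℝ) : Prop :=
  (∃ L : NNReal, LipschitzWith L (fun p : ℝ × ℝ => g p.1 p.2)) ∧
  (∀ v ∈ Set.Icc (0:ℝ) 1, StrictAntiOn (fun u => g u v) (Set.Icc 0 1)) ∧
  (∀ u ∈ Set.Icc (0:ℝ) 1, StrictAntiOn (fun v => g u v) (Set.Icc 0 1)) ∧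
  Filter.Tendsto (fun u => g u 0) Filter.atTop Filter.atBot

/-- (H3): `g(0,1) > 0` and there is `E ∈ (0,1)` with `g(E,E) = 0`. -/
def HypH3 (g : ℝ → ℝ → ℝ) : Prop :=
  0 < g 0 1 ∧ ∃ E ∈ Set.Ioo (0:ℝ) 1, g E E = 0

/-- (H4): if `1 > ū ≥ u̲ > 0` with `g(u̲,ū) ≤ 0` and `g(ū,u̲) ≥ 0`, then `u̲ = ū = E`. -/
def HypH4 (g : ℝ → ℝ → ℝ) (E : ℝ) : Prop :=
  ∀ ubar lbar : ℝ, ubar < 1 → lbar ≤ ubar → 0 < lbar →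
    g lbar ubar ≤ 0 → 0 ≤ g ubar lbar → lbar = E ∧ ubar = E

/-- A bounded mild solution of the delayed lattice differential equation
`du_n/dt = D(u_{n+1} − 2u_n + u_{n−1}) + u_n g(u_n(t), u_n(t−τ))` with initial data `φ`
on `[−τ,0]`, written via the variation-of-constants formula with auxiliary constant `d`. -/
def MildSolution (D τ d : ℝ) (g : ℝ → ℝ → ℝ) (φ u : ℤ → ℝ → ℝ) : Prop :=
  (∃ C : ℝ, ∀ (n : ℤ) (t : ℝ), -τ ≤ t → |u n t| ≤ C) ∧
  (∀ n : ℤ, ContinuousOn (u n) (Set.Ici (-τ))) ∧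
  (∀ (n : ℤ) (s : ℝ), s ∈ Set.Icc (-τ) 0 → u n s = φ n s) ∧
  (∀ (n : ℤ) (t : ℝ), 0 < t →
    u n t = Real.exp (-(2*D+d)*t) * φ n 0 +
      ∫ s in (0:ℝ)..t, Real.exp (-(2*D+d)*(t-s)) *
        (d * u n s + D * (u (n+1) s + u (n-1) s) + u n s * g (u n s) (u n (s - τ))))

/-!
Let `L` be a Lipschitz constant of `g` and `F(a, b, c, e) = L a + D (b + c) + a g(a, e)`. Then
`e^{(2D+L)t} uₙ(t) = φₙ(0) + ∫₀ᵗ e^{(2D+L)s} F(uₙ(s), uₙ₊₁(s), uₙ₋₁(s), uₙ(s-τ)) ds`, and `F` maps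
`[0,1]⁴` into `[0, 2D+L]`: this uses `g(1,0) = 0` and that `g` decreases in its delayed argument.
As `F` is Lipschitz on bounded sets, the largest distance `θ(t)` from `uₙ(s)`, `n ∈ ℤ`,
`-τ ≤ s ≤ t`, to `[0,1]` satisfies `θ(t) ≤ K ∫₀ᵗ θ`, so `θ = 0` by Gronwall's lemma.
-/

open Set MeasureTheory intervalIntegral

noncomputable def clampUnit (x : ℝ) : ℝ := max 0 (min x 1)

noncomputable def distUnit (x : ℝ) : ℝ := max (max (x - 1) (-x)) 0

lemma clampUnit_mem (x : ℝ) : clampUnit x ∈ Icc (0 : ℝ) 1 :=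
  ⟨le_max_left _ _, max_le zero_le_one (min_le_right _ _)⟩

lemma distUnit_nonneg (x : ℝ) : 0 ≤ distUnit x := le_max_right _ _

lemma sub_one_le_distUnit (x : ℝ) : x - 1 ≤ distUnit x :=
  (le_max_left _ _).trans (le_max_left _ _)

lemma neg_le_distUnit (x : ℝ) : -x ≤ distUnit x :=
  (le_max_right _ _).trans (le_max_left _ _)

lemma distUnit_le {x y : ℝ} (h₁ : x - 1 ≤ y) (h₂ : -x ≤ y) (h₀ : 0 ≤ y) : distUnit x ≤ y :=
  max_le (max_le h₁ h₂) h₀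

lemma distUnit_eq_zero {x : ℝ} (hx : x ∈ Icc (0 : ℝ) 1) : distUnit x = 0 :=
  le_antisymm (distUnit_le (by linarith [hx.2]) (by linarith [hx.1]) le_rfl) (distUnit_nonneg x)

lemma distUnit_le_abs_add_one (x : ℝ) : distUnit x ≤ |x| + 1 :=
  distUnit_le (by linarith [le_abs_self x]) (by linarith [neg_abs_le x]) (by positivity)

lemma abs_sub_clampUnit_le (x : ℝ) : |x - clampUnit x| ≤ distUnit x := by
  unfold clampUnit
  rcases le_total x 0 with h₀ | h₀
  · rw [min_eq_left (by linarith), max_eq_left h₀, sub_zero, abs_of_nonpos h₀]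
    exact neg_le_distUnit x
  rcases le_total x 1 with h₁ | h₁
  · rw [min_eq_left h₁, max_eq_right h₀, sub_self, abs_zero]
    exact distUnit_nonneg x
  · rw [min_eq_right h₁, max_eq_right zero_le_one, abs_of_nonneg (by linarith)]
    exact sub_one_le_distUnit x

lemma abs_sub_le_of_lipschitzWith {g : ℝ → ℝ → ℝ} {L : NNReal}
    (hL : LipschitzWith L fun p : ℝ × ℝ => g p.1 p.2) (a e a' e' : ℝ) :
    |g a e - g a' e'| ≤ L * max |a - a'| |e - e'| := by
  simpa [Prod.dist_eq, Real.dist_eq] using hL.dist_le_mul (a, e) (a', e')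

/-- `u' = D (b - 2a + c) + a g(a, e)` becomes
`(e^{(2D+k)t} u)' = e^{(2D+k)t} shiftedRhs D k g a b c e`
for the lattice values `a = uₙ(t)`, `b = uₙ₊₁(t)`, `c = uₙ₋₁(t)`, `e = uₙ(t - τ)`. -/
def shiftedRhs (D k : ℝ) (g : ℝ → ℝ → ℝ) (a b c e : ℝ) : ℝ :=
  k * a + D * (b + c) + a * g a e

section Reaction

variable {D k : ℝ} {g : ℝ → ℝ → ℝ} {L : NNReal}

lemma shiftedRhs_mem_Icc (hD : 0 ≤ D) (hL : LipschitzWith L fun p : ℝ × ℝ => g p.1 p.2)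
    (hkL : (L : ℝ) ≤ k) (hg : g 1 0 = 0) (hanti : ∀ a ∈ Icc (0 : ℝ) 1, AntitoneOn (g a) (Icc 0 1))
    {a b c e : ℝ} (ha : a ∈ Icc (0 : ℝ) 1) (hb : b ∈ Icc (0 : ℝ) 1) (hc : c ∈ Icc (0 : ℝ) 1)
    (he : e ∈ Icc (0 : ℝ) 1) : shiftedRhs D k g a b c e ∈ Icc 0 (2 * D + k) := by
  have hlow : -(L : ℝ) ≤ g a e := by
    have h := abs_sub_le_of_lipschitzWith hL a e 1 0
    rw [hg, sub_zero, sub_zero, abs_of_nonpos (by linarith [ha.2] : a - 1 ≤ 0),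
      abs_of_nonneg he.1] at h
    have hmax : max (-(a - 1)) e ≤ 1 := max_le (by linarith [ha.1]) he.2
    linarith [(abs_le.mp h).1, mul_le_mul_of_nonneg_left hmax L.coe_nonneg]
  have hup : g a e ≤ L * (1 - a) := by
    have h := abs_sub_le_of_lipschitzWith hL a 0 1 0
    rw [hg, sub_zero, sub_self, abs_zero, max_eq_left (abs_nonneg _)] at h
    rw [abs_of_nonpos (by linarith [ha.2] : a - 1 ≤ 0)] at h
    linarith [hanti a ha ⟨le_rfl, zero_le_one⟩ he he.1, (abs_le.mp h).2]
  have h1a : 0 ≤ 1 - a := sub_nonneg.2 ha.2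
  unfold shiftedRhs
  constructor
  · nlinarith [ha.1, hb.1, hc.1, mul_le_mul_of_nonneg_left hlow ha.1]
  · have h1 : a * g a e ≤ k * (1 - a) := by
      nlinarith [mul_le_mul_of_nonneg_left hup ha.1, mul_nonneg h1a (mul_nonneg L.coe_nonneg h1a),
        mul_nonneg (sub_nonneg.2 hkL) h1a]
    nlinarith [mul_nonneg hD (sub_nonneg.2 hb.2), mul_nonneg hD (sub_nonneg.2 hc.2)]

lemma abs_shiftedRhs_sub_clampUnit_le (hD : 0 ≤ D) (hk : 0 ≤ k)
    (hL : LipschitzWith L fun p : ℝ × ℝ => g p.1 p.2) (hg : g 1 0 = 0) {R ε a b c e : ℝ}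
    (ha : |a| ≤ R) (he : |e| ≤ R) (hεa : distUnit a ≤ ε) (hεb : distUnit b ≤ ε)
    (hεc : distUnit c ≤ ε) (hεe : distUnit e ≤ ε) :
    |shiftedRhs D k g a b c e -
        shiftedRhs D k g (clampUnit a) (clampUnit b) (clampUnit c) (clampUnit e)|
      ≤ (k + 2 * D + L * (R + 2)) * ε := by
  set a' := clampUnit a
  set e' := clampUnit e
  have hδa : |a - a'| ≤ ε := (abs_sub_clampUnit_le a).trans hεa
  have hδb : |b - clampUnit b| ≤ ε := (abs_sub_clampUnit_le b).trans hεb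
  have hδc : |c - clampUnit c| ≤ ε := (abs_sub_clampUnit_le c).trans hεc
  have hδe : |e - e'| ≤ ε := (abs_sub_clampUnit_le e).trans hεe
  have ha' : |a'| ≤ 1 := abs_le.2 ⟨by linarith [(clampUnit_mem a).1], (clampUnit_mem a).2⟩
  have hg_le : |g a e| ≤ L * (R + 1) := by
    have h := abs_sub_le_of_lipschitzWith hL a e 1 0
    rw [hg, sub_zero, sub_zero] at h
    refine h.trans (mul_le_mul_of_nonneg_left (max_le ?_ (by linarith)) L.coe_nonneg)
    linarith [abs_sub a (1 : ℝ), abs_one (α := ℝ)]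
  have hg_sub : |g a e - g a' e'| ≤ L * ε :=
    (abs_sub_le_of_lipschitzWith hL a e a' e').trans
      (mul_le_mul_of_nonneg_left (max_le hδa hδe) L.coe_nonneg)
  have hsplit : shiftedRhs D k g a b c e -
        shiftedRhs D k g a' (clampUnit b) (clampUnit c) e' =
      k * (a - a') + D * ((b - clampUnit b) + (c - clampUnit c)) +
        ((a - a') * g a e + a' * (g a e - g a' e')) := by
    unfold shiftedRhs; ring
  rw [hsplit]
  calc _ ≤ |k * (a - a')| + |D * ((b - clampUnit b) + (c - clampUnit c))| +
          (|(a - a') * g a e| + |a' * (g a e - g a' e')|) :=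
        (abs_add_three _ _ _).trans (add_le_add_right (abs_add_le _ _) _)
    _ ≤ k * ε + D * (ε + ε) + (ε * (L * (R + 1)) + 1 * (L * ε)) := by
        simp only [abs_mul, abs_of_nonneg hk, abs_of_nonneg hD]
        gcongr
        · exact (abs_add_le _ _).trans (add_le_add hδb hδc)
        · exact le_trans (abs_nonneg _) hδa
    _ = (k + 2 * D + L * (R + 2)) * ε := by ring

end Reaction

lemma le_add_integral_of_exp_mul_eq {β B x₀ x t : ℝ} {F Θ : ℝ → ℝ} (hβ : 0 ≤ β) (ht : 0 ≤ t)
    (hF : IntervalIntegrable (fun s => exp (β * s) * F s) volume 0 t)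
    (hΘ : IntervalIntegrable Θ volume 0 t) (hΘ₀ : ∀ s ∈ Icc 0 t, 0 ≤ Θ s)
    (hFle : ∀ s ∈ Icc 0 t, F s ≤ β * B + Θ s) (hx₀ : x₀ ≤ B)
    (hx : exp (β * t) * x = x₀ + ∫ s in (0 : ℝ)..t, exp (β * s) * F s) :
    x ≤ B + ∫ s in (0 : ℝ)..t, Θ s := by
  have hcont : Continuous fun s => β * exp (β * s) := by fun_prop
  have hexp : ∫ s in (0 : ℝ)..t, β * exp (β * s) = exp (β * t) - 1 := by
    rw [integral_eq_sub_of_hasDerivAt (f := fun s => exp (β * s)) (fun s _ => ?_)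
      (hcont.intervalIntegrable _ _)]
    · simp
    · simpa [mul_comm] using ((hasDerivAt_id s).const_mul β).exp
  have hpointwise : ∀ s ∈ Icc 0 t,
      exp (β * s) * F s ≤ B * (β * exp (β * s)) + exp (β * t) * Θ s := by
    intro s hs
    have hes : exp (β * s) * Θ s ≤ exp (β * t) * Θ s :=
      mul_le_mul_of_nonneg_right (exp_le_exp.2 (mul_le_mul_of_nonneg_left hs.2 hβ)) (hΘ₀ s hs)
    nlinarith [mul_le_mul_of_nonneg_left (hFle s hs) (exp_pos (β * s)).le]
  have hintegral := integral_mono_on ht hF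
    (((hcont.intervalIntegrable _ _).const_mul B).add (hΘ.const_mul _)) hpointwise
  rw [integral_add ((hcont.intervalIntegrable _ _).const_mul B) (hΘ.const_mul _),
    intervalIntegral.integral_const_mul B, hexp, intervalIntegral.integral_const_mul] at hintegral
  have hlt : exp (β * t) * x ≤ exp (β * t) * (B + ∫ s in (0 : ℝ)..t, Θ s) := by
    rw [hx]; nlinarith
  exact le_of_mul_le_mul_left hlt (exp_pos _)

lemma integral_le_sub_mul_of_monotoneOn {θ : ℝ → ℝ} {a b : ℝ} (hab : a ≤ b)
    (hθ : MonotoneOn θ (Icc a b)) : ∫ s in a..b, θ s ≤ (b - a) * θ b := by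
  have hintegrable : IntervalIntegrable θ volume a b :=
    MonotoneOn.intervalIntegrable (by rwa [uIcc_of_le hab])
  simpa using integral_mono_on hab hintegrable intervalIntegrable_const
    fun s hs => hθ hs ⟨hab, le_rfl⟩ hs.2

lemma eq_zero_of_le_mul_integral {θ : ℝ → ℝ} {K : ℝ} (hK : 0 ≤ K) (hθ : MonotoneOn θ (Ici 0))
    (hθ₀ : ∀ t, 0 ≤ t → 0 ≤ θ t) (hle : ∀ t, 0 ≤ t → θ t ≤ K * ∫ s in (0 : ℝ)..t, θ s)
    {t : ℝ} (ht : 0 ≤ t) : θ t = 0 := by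
  -- With `Kδ < 1`, monotonicity turns the hypothesis at `(m+1)δ` into `θ((m+1)δ) ≤ Kδ θ((m+1)δ)`
  -- as soon as `θ(mδ) = 0`.
  set δ := 1 / (K + 1)
  have hδ : 0 < δ := by positivity
  have hKδ : K * δ < 1 := by
    rw [mul_one_div, div_lt_one (by linarith)]; linarith
  have hmonoIcc : ∀ {a b : ℝ}, 0 ≤ a → MonotoneOn θ (Icc a b) :=
    fun ha => hθ.mono fun s hs => ha.trans hs.1
  have hintegrable : ∀ {a b : ℝ}, 0 ≤ a → a ≤ b → IntervalIntegrable θ volume a b :=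
    fun ha hab => MonotoneOn.intervalIntegrable (by rw [uIcc_of_le hab]; exact hmonoIcc ha)
  have hgrid : ∀ m : ℕ, θ (m * δ) = 0 := by
    intro m
    induction m with
    | zero => simpa using le_antisymm (by simpa using hle 0 le_rfl) (hθ₀ 0 le_rfl)
    | succ m ih =>
      have h₀ : 0 ≤ (m : ℝ) * δ := by positivity
      have h₀₁ : (m : ℝ) * δ ≤ ((m + 1 : ℕ) : ℝ) * δ := by push_cast; nlinarith
      have hsplit := integral_add_adjacent_intervals (hintegrable le_rfl h₀)
        (hintegrable h₀ h₀₁)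
      have hfirst := integral_le_sub_mul_of_monotoneOn h₀ (hmonoIcc le_rfl)
      have hsecond := integral_le_sub_mul_of_monotoneOn h₀₁ (hmonoIcc h₀)
      have hlen : ((m + 1 : ℕ) : ℝ) * δ - m * δ = δ := by push_cast; ring
      rw [ih, mul_zero] at hfirst
      rw [hlen] at hsecond
      have hpos := hθ₀ _ (h₀.trans h₀₁)
      have := hle _ (h₀.trans h₀₁)
      rw [← hsplit] at this
      nlinarith
  obtain ⟨m, hm⟩ := exists_nat_ge (t / δ)
  have htm : t ≤ m * δ := by rwa [div_le_iff₀ hδ] at hm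
  exact le_antisymm ((hθ ht (ht.trans htm) htm).trans_eq (hgrid m)) (hθ₀ t ht)

section VariationOfConstants

variable {c : ℝ} {w G : ℝ → ℝ}

lemma hasDerivAt_of_eq_variationOfConstants (hG : ContinuousOn G (Ici 0))
    (hmild : ∀ t, 0 < t →
      w t = exp (-c * t) * w 0 + ∫ s in (0 : ℝ)..t, exp (-c * (t - s)) * G s)
    {x : ℝ} (hx : 0 < x) : HasDerivAt w (G x - c * w x) x := by
  set V : ℝ → ℝ := fun t => w 0 + ∫ s in (0 : ℝ)..t, exp (c * s) * G s
  have hwV : ∀ t, 0 < t → w t = exp (-c * t) * V t := by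
    intro t ht
    rw [hmild t ht, mul_add, ← intervalIntegral.integral_const_mul]
    congr 1
    refine integral_congr fun s _ => ?_
    rw [← mul_assoc, ← exp_add]
    ring_nf
  have hcont : ContinuousOn (fun s => exp (c * s) * G s) (Ici 0) :=
    (continuous_exp.comp (continuous_const_mul c)).continuousOn.mul hG
  have hcont' := hcont.mono Ioi_subset_Ici_self
  have hV : HasDerivAt V (exp (c * x) * G x) x :=
    (integral_hasDerivAt_right (hcont.mono Icc_subset_Ici_self |>.intervalIntegrable_of_Icc hx.le)
      (hcont'.stronglyMeasurableAtFilter isOpen_Ioi x hx)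
      (hcont'.continuousAt (Ioi_mem_nhds hx))).const_add _
  have hE : HasDerivAt (fun t => exp (-c * t)) (exp (-c * x) * -c) x := by
    simpa [mul_comm] using ((hasDerivAt_id x).const_mul (-c)).exp
  refine ((hE.mul hV).congr_of_eventuallyEq ?_).congr_deriv ?_
  · filter_upwards [Ioi_mem_nhds hx] with t ht using hwV t ht
  · rw [hwV x hx, ← mul_assoc, ← exp_add]
    ring_nf
    simp

lemma exp_mul_eq_add_integral_of_eq_variationOfConstants (hw : ContinuousOn w (Ici 0))
    (hG : ContinuousOn G (Ici 0))
    (hmild : ∀ t, 0 < t →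
      w t = exp (-c * t) * w 0 + ∫ s in (0 : ℝ)..t, exp (-c * (t - s)) * G s)
    (β : ℝ) {t : ℝ} (ht : 0 ≤ t) :
    exp (β * t) * w t = w 0 + ∫ s in (0 : ℝ)..t, exp (β * s) * (G s + (β - c) * w s) := by
  have hderiv : ∀ x ∈ Ioo 0 t, HasDerivAt (fun s => exp (β * s) * w s)
      (exp (β * x) * (G x + (β - c) * w x)) x := by
    intro x hx
    have hE : HasDerivAt (fun s => exp (β * s)) (exp (β * x) * β) x := by
      simpa [mul_comm] using ((hasDerivAt_id x).const_mul β).exp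
    exact (hE.mul (hasDerivAt_of_eq_variationOfConstants hG hmild hx.1)).congr_deriv (by ring)
  have hcont : ContinuousOn (fun s => exp (β * s) * (G s + (β - c) * w s)) (Icc 0 t) :=
    ((continuous_exp.comp (continuous_const_mul β)).continuousOn.mul
      (hG.add (continuousOn_const.mul hw))).mono Icc_subset_Ici_self
  rw [integral_eq_sub_of_hasDeriv_right_of_le ht
    ((continuous_exp.comp (continuous_const_mul β)).continuousOn.mul (hw.mono Icc_subset_Ici_self))
    (fun x hx => (hderiv x hx).hasDerivWithinAt) (hcont.intervalIntegrable_of_Icc ht)]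
  simp

end VariationOfConstants

lemma distUnit_le_integral_of_exp_mul_eq {β x₀ x t : ℝ} {F Θ : ℝ → ℝ} (hβ : 0 ≤ β) (ht : 0 ≤ t)
    (hF : ContinuousOn F (Icc 0 t)) (hΘ : IntervalIntegrable Θ volume 0 t)
    (hΘ₀ : ∀ s ∈ Icc 0 t, 0 ≤ Θ s) (hFmem : ∀ s ∈ Icc 0 t, F s ∈ Icc (-Θ s) (β + Θ s))
    (hx₀ : x₀ ∈ Icc (0 : ℝ) 1)
    (hx : exp (β * t) * x = x₀ + ∫ s in (0 : ℝ)..t, exp (β * s) * F s) :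
    distUnit x ≤ ∫ s in (0 : ℝ)..t, Θ s := by
  have hexp : ContinuousOn (fun s => exp (β * s)) (Icc 0 t) :=
    (continuous_exp.comp (continuous_const_mul β)).continuousOn
  have hupper := le_add_integral_of_exp_mul_eq (B := 1) hβ ht
    ((hexp.mul hF).intervalIntegrable_of_Icc ht)
    hΘ hΘ₀ (fun s hs => by linarith [(hFmem s hs).2]) hx₀.2 hx
  have hlower := le_add_integral_of_exp_mul_eq (B := 0) (x := -x) (F := fun s => -F s) hβ ht
    ((hexp.mul hF.neg).intervalIntegrable_of_Icc ht) hΘ hΘ₀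
    (fun s hs => by linarith [(hFmem s hs).1]) (neg_nonpos.2 hx₀.1)
    (by simp only [mul_neg, intervalIntegral.integral_neg, hx, neg_add])
  exact distUnit_le (by linarith) (by linarith) (integral_nonneg ht hΘ₀)

noncomputable def supDistUnit (u : ℤ → ℝ → ℝ) (τ t : ℝ) : ℝ :=
  sSup ((fun p : ℤ × ℝ => distUnit (u p.1 p.2)) '' (univ ×ˢ Icc (-τ) t))

section SupDistUnit

variable {u : ℤ → ℝ → ℝ} {τ C : ℝ}

lemma bddAbove_distUnit_image (hC : ∀ n t, -τ ≤ t → |u n t| ≤ C) (t : ℝ) :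
    BddAbove ((fun p : ℤ × ℝ => distUnit (u p.1 p.2)) '' (univ ×ˢ Icc (-τ) t)) := by
  refine ⟨C + 1, ?_⟩
  rintro _ ⟨⟨n, σ⟩, ⟨-, hσ⟩, rfl⟩
  linarith [distUnit_le_abs_add_one (u n σ), hC n σ hσ.1]

lemma distUnit_le_supDistUnit (hC : ∀ n t, -τ ≤ t → |u n t| ≤ C) (n : ℤ) {σ t : ℝ}
    (hσ : σ ∈ Icc (-τ) t) : distUnit (u n σ) ≤ supDistUnit u τ t :=
  le_csSup (bddAbove_distUnit_image hC t) ⟨(n, σ), ⟨mem_univ _, hσ⟩, rfl⟩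

lemma supDistUnit_nonneg (hC : ∀ n t, -τ ≤ t → |u n t| ≤ C) {t : ℝ} (ht : -τ ≤ t) :
    0 ≤ supDistUnit u τ t :=
  (distUnit_nonneg _).trans (distUnit_le_supDistUnit hC 0 ⟨le_rfl, ht⟩)

lemma monotoneOn_supDistUnit (hC : ∀ n t, -τ ≤ t → |u n t| ≤ C) :
    MonotoneOn (supDistUnit u τ) (Ici (-τ)) := fun t₁ ht₁ _ _ h =>
  csSup_le_csSup (bddAbove_distUnit_image hC _) ⟨_, ⟨(0, t₁), ⟨mem_univ _, ht₁, le_rfl⟩, rfl⟩⟩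
    (image_mono (prod_mono subset_rfl (Icc_subset_Icc_right h)))

lemma intervalIntegrable_supDistUnit (hC : ∀ n t, -τ ≤ t → |u n t| ≤ C) {a b : ℝ}
    (ha : -τ ≤ a) (hab : a ≤ b) : IntervalIntegrable (supDistUnit u τ) volume a b :=
  MonotoneOn.intervalIntegrable <| (monotoneOn_supDistUnit hC).mono <| by
    rw [uIcc_of_le hab]; exact fun s hs => ha.trans hs.1

lemma supDistUnit_le {t y : ℝ} (ht : -τ ≤ t)
    (h : ∀ n σ, σ ∈ Icc (-τ) t → distUnit (u n σ) ≤ y) : supDistUnit u τ t ≤ y :=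
  csSup_le ⟨_, ⟨(0, t), ⟨mem_univ _, ht, le_rfl⟩, rfl⟩⟩ <| by
    rintro _ ⟨⟨n, σ⟩, ⟨-, hσ⟩, rfl⟩
    exact h n σ hσ

end SupDistUnit

section MildSolution

variable {D τ d C : ℝ} {g : ℝ → ℝ → ℝ} {L : NNReal} {φ u : ℤ → ℝ → ℝ}

lemma MildSolution.continuousOn_shiftedRhs (hu : MildSolution D τ d g φ u) (hτ : 0 ≤ τ)
    (hg : Continuous fun p : ℝ × ℝ => g p.1 p.2) (k : ℝ) (n : ℤ) :
    ContinuousOn (fun s => shiftedRhs D k g (u n s) (u (n + 1) s) (u (n - 1) s) (u n (s - τ)))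
      (Ici 0) := by
  have hcont : ∀ m, ContinuousOn (u m) (Ici 0) :=
    fun m => (hu.2.1 m).mono (Ici_subset_Ici.2 (by linarith))
  have hdelay : ContinuousOn (fun s => u n (s - τ)) (Ici 0) :=
    (hu.2.1 n).comp (continuous_sub_right τ).continuousOn fun s hs => by
      simp only [mem_Ici] at hs ⊢; linarith
  exact ((continuousOn_const.mul (hcont n)).add
    (continuousOn_const.mul ((hcont (n + 1)).add (hcont (n - 1))))).add
    ((hcont n).mul (hg.comp_continuousOn ((hcont n).prodMk hdelay)))

lemma MildSolution.exp_mul_eq_add_integral (hu : MildSolution D τ d g φ u) (hτ : 0 ≤ τ)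
    (hg : Continuous fun p : ℝ × ℝ => g p.1 p.2) (k : ℝ) (n : ℤ) {t : ℝ} (ht : 0 ≤ t) :
    exp ((2 * D + k) * t) * u n t = φ n 0 + ∫ s in (0 : ℝ)..t, exp ((2 * D + k) * s) *
      shiftedRhs D k g (u n s) (u (n + 1) s) (u (n - 1) s) (u n (s - τ)) := by
  have h₀ : u n 0 = φ n 0 := hu.2.2.1 n 0 ⟨by linarith, le_rfl⟩
  rw [exp_mul_eq_add_integral_of_eq_variationOfConstants (c := 2 * D + d)
    ((hu.2.1 n).mono (Ici_subset_Ici.2 (by linarith))) (hu.continuousOn_shiftedRhs hτ hg d n)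
    (fun t ht => by rw [h₀]; exact hu.2.2.2 n t ht) (2 * D + k) ht, h₀]
  congr 1
  refine integral_congr fun s _ => ?_
  simp only [shiftedRhs]
  ring

lemma MildSolution.distUnit_le_integral (hu : MildSolution D τ d g φ u) (hτ : 0 ≤ τ)
    (hD : 0 ≤ D) (hL : LipschitzWith L fun p : ℝ × ℝ => g p.1 p.2) (hg : g 1 0 = 0)
    (hanti : ∀ a ∈ Icc (0 : ℝ) 1, AntitoneOn (g a) (Icc 0 1))
    (hφ : ∀ n s, s ∈ Icc (-τ) 0 → φ n s ∈ Icc (0 : ℝ) 1) (hC : ∀ n t, -τ ≤ t → |u n t| ≤ C)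
    (n : ℤ) {t : ℝ} (ht : 0 ≤ t) :
    distUnit (u n t) ≤ ∫ s in (0 : ℝ)..t, (L + 2 * D + L * (C + 2)) * supDistUnit u τ s := by
  have hC₀ : 0 ≤ C := (abs_nonneg _).trans (hC 0 0 (by linarith))
  have hK : 0 ≤ (L : ℝ) + 2 * D + L * (C + 2) := by positivity
  have hsub : Icc 0 t ⊆ Ici (-τ) := fun s hs => by simp only [mem_Ici]; linarith [hs.1]
  refine distUnit_le_integral_of_exp_mul_eq (by positivity) ht
    ((hu.continuousOn_shiftedRhs hτ hL.continuous L n).mono Icc_subset_Ici_self)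
    ((intervalIntegrable_supDistUnit hC (by linarith) ht).const_mul _)
    (fun s hs => mul_nonneg hK (supDistUnit_nonneg hC (hsub hs)))
    (fun s hs => ?_) (hφ n 0 ⟨by linarith, le_rfl⟩)
    (hu.exp_mul_eq_add_integral hτ hL.continuous L n ht)
  have hs₀ : -τ ≤ s := hsub hs
  have hdelay : s - τ ∈ Icc (-τ) s := ⟨by linarith [hs.1], by linarith⟩
  have hdiff := abs_le.1 <| abs_shiftedRhs_sub_clampUnit_le hD L.coe_nonneg hL hg
    (hC n s hs₀) (hC n (s - τ) hdelay.1)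
    (distUnit_le_supDistUnit hC n ⟨hs₀, le_rfl⟩)
    (distUnit_le_supDistUnit hC (n + 1) ⟨hs₀, le_rfl⟩)
    (distUnit_le_supDistUnit hC (n - 1) ⟨hs₀, le_rfl⟩) (distUnit_le_supDistUnit hC n hdelay)
  have hclamp := shiftedRhs_mem_Icc hD hL le_rfl hg hanti (clampUnit_mem (u n s))
    (clampUnit_mem (u (n + 1) s)) (clampUnit_mem (u (n - 1) s)) (clampUnit_mem (u n (s - τ)))
  constructor <;> linarith [hclamp.1, hclamp.2]

lemma MildSolution.supDistUnit_le_integral (hu : MildSolution D τ d g φ u) (hτ : 0 ≤ τ)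
    (hD : 0 ≤ D) (hL : LipschitzWith L fun p : ℝ × ℝ => g p.1 p.2) (hg : g 1 0 = 0)
    (hanti : ∀ a ∈ Icc (0 : ℝ) 1, AntitoneOn (g a) (Icc 0 1))
    (hφ : ∀ n s, s ∈ Icc (-τ) 0 → φ n s ∈ Icc (0 : ℝ) 1) (hC : ∀ n t, -τ ≤ t → |u n t| ≤ C)
    {t : ℝ} (ht : 0 ≤ t) :
    supDistUnit u τ t ≤ (L + 2 * D + L * (C + 2)) * ∫ s in (0 : ℝ)..t, supDistUnit u τ s := by
  rw [← intervalIntegral.integral_const_mul]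
  have hC₀ : 0 ≤ C := (abs_nonneg _).trans (hC 0 0 (by linarith))
  have hnonneg : ∀ s, 0 ≤ s → 0 ≤ (L + 2 * D + L * (C + 2)) * supDistUnit u τ s :=
    fun s hs => mul_nonneg (by positivity) (supDistUnit_nonneg hC (by linarith))
  refine supDistUnit_le (by linarith) fun m σ hσ => ?_
  rcases le_or_gt σ 0 with hσ₀ | hσ₀
  · rw [hu.2.2.1 m σ ⟨hσ.1, hσ₀⟩, distUnit_eq_zero (hφ m σ ⟨hσ.1, hσ₀⟩)]
    exact integral_nonneg ht fun s hs => hnonneg s hs.1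
  · exact (hu.distUnit_le_integral hτ hD hL hg hanti hφ hC m hσ₀.le).trans <|
      integral_mono_interval le_rfl hσ₀.le hσ.2
      ((ae_restrict_mem measurableSet_Ioc).mono fun s hs => hnonneg s hs.1.le)
      ((intervalIntegrable_supDistUnit hC (by linarith) ht).const_mul _)

end MildSolution

theorem stmt6_general (D τ d : ℝ) (hD : 0 < D) (hτ : 0 ≤ τ)
    (g : ℝ → ℝ → ℝ) (hH1 : HypH1 g) (hH2 : HypH2 g)
    (φ u : ℤ → ℝ → ℝ)
    (hφrange : ∀ (n : ℤ) (s : ℝ), s ∈ Set.Icc (-τ) 0 → φ n s ∈ Set.Icc (0:ℝ) 1)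
    (hu : MildSolution D τ d g φ u) :
    ∀ (n : ℤ) (t : ℝ), 0 < t → u n t ∈ Set.Icc (0:ℝ) 1 := by
  obtain ⟨hg, -⟩ := hH1
  obtain ⟨⟨L, hL⟩, -, hanti, -⟩ := hH2
  obtain ⟨C, hC⟩ := hu.1
  have hC₀ : 0 ≤ C := (abs_nonneg _).trans (hC 0 0 (by linarith))
  have hzero : ∀ t, 0 ≤ t → supDistUnit u τ t = 0 := fun t ht =>
    eq_zero_of_le_mul_integral (by positivity)
      ((monotoneOn_supDistUnit hC).mono (Ici_subset_Ici.2 (by linarith)))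
      (fun s hs => supDistUnit_nonneg hC (by linarith))
      (fun s hs => hu.supDistUnit_le_integral hτ hD.le hL hg
        (fun a ha => (hanti a ha).antitoneOn) hφrange hC hs) ht
  intro n t ht
  have hdist := (distUnit_le_supDistUnit hC n ⟨by linarith, le_rfl⟩).trans_eq (hzero t ht.le)
  exact ⟨by linarith [neg_le_distUnit (u n t)], by linarith [sub_one_le_distUnit (u n t)]⟩

/-- The mild solution of the delayed lattice equation with initial data in `[0,1]`
stays in `[0,1]` for all positive times. -/
theorem stmt6 (D τ d : ℝ) (hD : 0 < D) (hτ : 0 ≤ τ) (hd : 0 < d)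
    (g : ℝ → ℝ → ℝ) (hH1 : HypH1 g) (hH2 : HypH2 g)
    (hdmono : MonotoneOn (fun u => d * u + u * g u 1) (Set.Icc 0 1))
    (φ u : ℤ → ℝ → ℝ)
    (hφrange : ∀ (n : ℤ) (s : ℝ), s ∈ Set.Icc (-τ) 0 → φ n s ∈ Set.Icc (0:ℝ) 1)
    (hφcont : ∀ n : ℤ, ContinuousOn (φ n) (Set.Icc (-τ) 0))
    (hu : MildSolution D τ d g φ u) :
    ∀ (n : ℤ) (t : ℝ), 0 < t → u n t ∈ Set.Icc (0:ℝ) 1 :=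
  stmt6_general D τ d hD hτ g hH1 hH2 φ u hφrange hu
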